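/- Let d > 0, α₀ ∈ ℝ, r(α) = √(d / cos(2(α−α₀))) for |α − α₀| < π/4, and U(α,β) = r(α)·(cos α cos β, sin α cos β, cos α sin β, sin α sin β). Let τ₁(α,β) = N(∂U/∂α(α,β)) and τ₂(α,β) = N(∂U/∂β(α,β)). Then for every continuously differentiable compactly supported vector field X : ℝ⁴ → ℝ⁴, ∫_{α₀−π/4}^{α₀+π/4} ∫_0^{2π} ( ⟨τ₁, DX(U(α,β)) τ₁⟩ + ⟨τ₂, DX(U(α,β)) τ₂⟩ ) · r(α) · √((r'(α))² + (r(α))²) dβ dα = 0. (That is, the rectifiable 2-varifold associated to ℋ² restricted to the surface range(U) is stationary.) -/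

import Mathlib

open Real MeasureTheory
open scoped RealInnerProductSpace

/-- `r^{d,α₀}(α) = √(d / cos(2(α−α₀)))`. -/
noncomputable def rr (d α₀ α : ℝ) : ℝ := Real.sqrt (d / Real.cos (2 * (α - α₀)))

/-- The surface parameterization
`U(α,β) = r(α)·(cos α cos β, sin α cos β, cos α sin β, sin α sin β)`. -/
noncomputable def U (d α₀ α β : ℝ) : EuclideanSpace ℝ (Fin 4) :=
  rr d α₀ α •
    (WithLp.toLp 2 ![Real.cos α * Real.cos β, Real.sin α * Real.cos β,
       Real.cos α * Real.sin β, Real.sin α * Real.sin β] :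
      EuclideanSpace ℝ (Fin 4))

/-- Radial unit vector `N(x) = x / ‖x‖`. -/
noncomputable def N (x : EuclideanSpace ℝ (Fin 4)) : EuclideanSpace ℝ (Fin 4) :=
  ‖x‖⁻¹ • x

/-!
With `c = cos (2 (α - α₀))` we have `‖∂_α U‖ = r / c`, `‖∂_β U‖ = r` and `√(r'² + r²) = r / c`,
so the integrand is `c⁻¹ (⟪DX W, W⟫ + ⟪DX ∂_βU, ∂_βU⟫)` where `W = c ∂_α U`. The surface is
minimal, which in this parametrization reads `∂_α W = U / c` (and `∂_β² U = -U`); hence the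
integrand is the divergence `∂_α ⟪X ∘ U, W⟫ + ∂_β (c⁻¹ ⟪X ∘ U, ∂_β U⟫)`. The `β`-term integrates
to zero by `2π`-periodicity, and the `α`-term by Fubini, since `r → ∞` at both ends of the
`α`-interval, so `X ∘ U` vanishes near them.
-/

open Set Function Filter Topology

local notation "ℝ⁴" => EuclideanSpace ℝ (Fin 4)

section divergenceTheorem

variable {a b a' b' : ℝ}

theorem eq_zero_of_hasDerivAt_of_notMem_Ioo {F f : ℝ → ℝ}
    (hF : ∀ α ∈ Ioo a b, HasDerivAt F (f α) α) (hF0 : ∀ α ∈ Ioo a b, α ∉ Ioo a' b' → F α = 0) :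
    ∀ α ∈ Ioo a b \ Icc a' b', f α = 0 := by
  intro α hα
  have hopen : IsOpen (Ioo a b \ Icc a' b') := isOpen_Ioo.sdiff isClosed_Icc
  refine (hF α hα.1).unique ((hasDerivAt_const α 0).congr_of_eventuallyEq ?_)
  filter_upwards [hopen.mem_nhds hα] with x hx
  exact hF0 x hx.1 fun h => hx.2 (Ioo_subset_Icc_self h)

theorem setIntegral_Ioo_eq_zero_of_hasDerivAt {F f : ℝ → ℝ} (ha' : a < a') (hab' : a' ≤ b')
    (hb' : b' < b) (hf : ContinuousOn f (Icc a' b')) (hF : ∀ α ∈ Ioo a b, HasDerivAt F (f α) α)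
    (hF0 : ∀ α ∈ Ioo a b, α ∉ Ioo a' b' → F α = 0) :
    ∫ α in Ioo a b, f α = 0 := by
  have hsub : Icc a' b' ⊆ Ioo a b := Icc_subset_Ioo ha' hb'
  rw [setIntegral_eq_of_subset_of_forall_sdiff_eq_zero measurableSet_Ioo hsub
      (eq_zero_of_hasDerivAt_of_notMem_Ioo hF hF0),
    integral_Icc_eq_integral_Ioc, ← intervalIntegral.integral_of_le hab',
    intervalIntegral.integral_eq_sub_of_hasDerivAt
      (fun α hα => hF α (hsub (uIcc_of_le hab' ▸ hα)))
      ((uIcc_of_le hab' ▸ hf).intervalIntegrable),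
    hF0 b' (hsub (right_mem_Icc.2 hab')) (fun h => h.2.false),
    hF0 a' (hsub (left_mem_Icc.2 hab')) (fun h => h.1.false), sub_self]

/-- The divergence theorem on a rectangle, in a case without boundary terms. -/
theorem integral_integral_add_eq_zero_of_hasDerivAt {F G f g : ℝ → ℝ → ℝ} {c e : ℝ}
    (ha' : a < a') (hab' : a' ≤ b') (hb' : b' < b) (hce : c ≤ e)
    (hf : ContinuousOn (uncurry f) (Ioo a b ×ˢ univ))
    (hg : ∀ α ∈ Ioo a b, Continuous (g α))
    (hF : ∀ α ∈ Ioo a b, ∀ β, HasDerivAt (F · β) (f α β) α)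
    (hG : ∀ α ∈ Ioo a b, ∀ β, HasDerivAt (G α) (g α β) β)
    (hF0 : ∀ α ∈ Ioo a b, α ∉ Ioo a' b' → ∀ β, F α β = 0)
    (hGce : ∀ α ∈ Ioo a b, G α c = G α e) :
    ∫ α in Ioo a b, ∫ β in Ioo c e, (f α β + g α β) = 0 := by
  have hsub : Icc a' b' ⊆ Ioo a b := Icc_subset_Ioo ha' hb'
  have hfα : ∀ α ∈ Ioo a b, Continuous (f α) := fun α hα =>
    hf.comp_continuous (Continuous.prodMk_right α) fun β => ⟨hα, mem_univ β⟩
  have hg0 : ∀ α ∈ Ioo a b, ∫ β in Ioo c e, g α β = 0 := by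
    intro α hα
    rw [← integral_Ioc_eq_integral_Ioo, ← intervalIntegral.integral_of_le hce,
      intervalIntegral.integral_eq_sub_of_hasDerivAt (fun β _ => hG α hα β)
        ((hg α hα).intervalIntegrable c e), hGce α hα, sub_self]
  have hf_int : IntegrableOn (uncurry f) (Ioo a b ×ˢ Ioo c e) := by
    refine IntegrableOn.of_forall_sdiff_eq_zero (s := Icc a' b' ×ˢ Icc c e)
      ((hf.mono (prod_mono hsub (subset_univ _))).integrableOn_compact
        (isCompact_Icc.prod isCompact_Icc))
      (measurableSet_Ioo.prod measurableSet_Ioo) ?_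
    rintro ⟨α, β⟩ ⟨⟨hα, hβ⟩, hαβ⟩
    exact eq_zero_of_hasDerivAt_of_notMem_Ioo (fun α hα => hF α hα β)
      (fun α hα hα' => hF0 α hα hα' β) α ⟨hα, fun h => hαβ ⟨h, Ioo_subset_Icc_self hβ⟩⟩
  calc ∫ α in Ioo a b, ∫ β in Ioo c e, (f α β + g α β)
      = ∫ α in Ioo a b, ∫ β in Ioo c e, f α β := by
        refine setIntegral_congr_fun measurableSet_Ioo fun α hα => ?_
        rw [integral_add ((hfα α hα).integrableOn_Icc.mono_set Ioo_subset_Icc_self)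
          ((hg α hα).integrableOn_Icc.mono_set Ioo_subset_Icc_self), hg0 α hα, add_zero]
    _ = ∫ β in Ioo c e, ∫ α in Ioo a b, f α β :=
        integral_integral_swap (by rwa [Measure.prod_restrict])
    _ = 0 := by
        have hfiber (β : ℝ) : ∫ α in Ioo a b, f α β = 0 :=
          setIntegral_Ioo_eq_zero_of_hasDerivAt ha' hab' hb'
            (hf.comp (Continuous.prodMk_left β).continuousOn fun α hα => ⟨hsub hα, mem_univ β⟩)
            (fun α hα => hF α hα β) (fun α hα hα' => hF0 α hα hα' β)
        simp only [hfiber, integral_zero]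

end divergenceTheorem

theorem N_smul_of_pos {t : ℝ} (ht : 0 < t) (x : ℝ⁴) : N (t • x) = N x := by
  rw [N, N, norm_smul, norm_of_nonneg ht.le, smul_smul, mul_inv, mul_right_comm,
    inv_mul_cancel₀ ht.ne', one_mul]

theorem inner_N_apply_N (L : ℝ⁴ →L[ℝ] ℝ⁴) (x : ℝ⁴) : ⟪N x, L (N x)⟫ = ⟪L x, x⟫ / ‖x‖ ^ 2 := by
  rw [N, map_smul, real_inner_smul_left, real_inner_smul_right, real_inner_comm]
  ring

/-- `emb x y β = (x, y) ⊗ (cos β, sin β)` under `ℝ² ⊗ ℝ² ≅ ℝ⁴`. -/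
noncomputable def emb (x y β : ℝ) : ℝ⁴ :=
  WithLp.toLp 2 ![x * cos β, y * cos β, x * sin β, y * sin β]

theorem continuous_emb : Continuous fun p : ℝ × ℝ × ℝ => emb p.1 p.2.1 p.2.2 := by
  unfold emb
  fun_prop

theorem smul_emb (t x y β : ℝ) : t • emb x y β = emb (t * x) (t * y) β := by
  simp only [emb, ← WithLp.toLp_smul, Matrix.smul_cons, smul_eq_mul, Matrix.smul_empty, mul_assoc]

theorem emb_eq_smul_add_smul (x y β : ℝ) : emb x y β = x • emb 1 0 β + y • emb 0 1 β := by
  ext i; fin_cases i <;> simp [emb]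

theorem emb_eq_cos_smul_add_sin_smul (x y β : ℝ) :
    emb x y β = cos β • emb x y 0 + sin β • emb x y (π / 2) := by
  ext i; fin_cases i <;> simp [emb, mul_comm]

theorem emb_add_pi (x y β : ℝ) : emb x y (β + π) = -emb x y β := by
  ext i; fin_cases i <;> simp [emb]

theorem inner_emb (x y x' y' β : ℝ) : ⟪emb x y β, emb x' y' β⟫ = x * x' + y * y' := by
  simp only [emb, PiLp.inner_apply, RCLike.inner_apply, conj_trivial, Fin.sum_univ_four,
    Fin.isValue, Matrix.cons_val_zero, Matrix.cons_val_one, Matrix.cons_val]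
  linear_combination (x * x' + y * y') * sin_sq_add_cos_sq β

theorem norm_emb (x y β : ℝ) : ‖emb x y β‖ = √(x ^ 2 + y ^ 2) := by
  rw [norm_eq_sqrt_real_inner, inner_emb]
  ring_nf

theorem hasDerivAt_emb {x y : ℝ → ℝ} {x' y' t : ℝ} (hx : HasDerivAt x x' t)
    (hy : HasDerivAt y y' t) (β : ℝ) :
    HasDerivAt (fun s => emb (x s) (y s) β) (emb x' y' β) t := by
  rw [emb_eq_smul_add_smul x' y' β]
  exact ((hx.smul_const (emb 1 0 β)).add (hy.smul_const (emb 0 1 β))).congr_of_eventuallyEq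
    (.of_forall fun s => emb_eq_smul_add_smul _ _ β)

theorem hasDerivAt_emb_angle (x y β : ℝ) : HasDerivAt (emb x y) (emb x y (β + π / 2)) β := by
  have h := ((hasDerivAt_cos β).smul_const (emb x y 0)).add
    ((hasDerivAt_sin β).smul_const (emb x y (π / 2)))
  rw [emb_eq_cos_smul_add_sin_smul x y (β + π / 2), cos_add_pi_div_two, sin_add_pi_div_two]
  exact h.congr_of_eventuallyEq (.of_forall fun b => emb_eq_cos_smul_add_sin_smul x y b)

/-- `W = cos (2 (α - α₀)) • ∂_α U`. -/
noncomputable def W (d α₀ α β : ℝ) : ℝ⁴ :=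
  emb (rr d α₀ α * sin (α - 2 * α₀)) (rr d α₀ α * cos (α - 2 * α₀)) β

theorem rr_nonneg (d α₀ α : ℝ) : 0 ≤ rr d α₀ α :=
  sqrt_nonneg _

theorem U_eq_emb (d α₀ α β : ℝ) :
    U d α₀ α β = emb (rr d α₀ α * cos α) (rr d α₀ α * sin α) β := by
  simp only [U, emb, ← WithLp.toLp_smul, Matrix.smul_cons, smul_eq_mul, Matrix.smul_empty,
    mul_assoc]

theorem norm_U (d α₀ α β : ℝ) : ‖U d α₀ α β‖ = rr d α₀ α := by
  have h : (rr d α₀ α * cos α) ^ 2 + (rr d α₀ α * sin α) ^ 2 = rr d α₀ α ^ 2 := by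
    linear_combination rr d α₀ α ^ 2 * cos_sq_add_sin_sq α
  rw [U_eq_emb, norm_emb, h, sqrt_sq (rr_nonneg d α₀ α)]

theorem norm_W (d α₀ α β : ℝ) : ‖W d α₀ α β‖ = rr d α₀ α := by
  have h : (rr d α₀ α * sin (α - 2 * α₀)) ^ 2 + (rr d α₀ α * cos (α - 2 * α₀)) ^ 2 =
      rr d α₀ α ^ 2 := by
    linear_combination rr d α₀ α ^ 2 * sin_sq_add_cos_sq (α - 2 * α₀)
  rw [W, norm_emb, h, sqrt_sq (rr_nonneg d α₀ α)]

theorem U_add_pi (d α₀ α β : ℝ) : U d α₀ α (β + π) = -U d α₀ α β := by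
  simp only [U_eq_emb, emb_add_pi]

theorem U_add_two_pi (d α₀ α β : ℝ) : U d α₀ α (β + 2 * π) = U d α₀ α β := by
  rw [two_mul, ← add_assoc, U_add_pi, U_add_pi, neg_neg]

theorem hasDerivAt_U_snd (d α₀ α β : ℝ) : HasDerivAt (U d α₀ α) (U d α₀ α (β + π / 2)) β := by
  rw [U_eq_emb]
  exact (hasDerivAt_emb_angle _ _ β).congr_of_eventuallyEq (.of_forall (U_eq_emb d α₀ α))

section radius

variable {d α₀ α : ℝ}

theorem cos_two_mul_sub_pos (h : α ∈ Ioo (α₀ - π / 4) (α₀ + π / 4)) :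
    0 < cos (2 * (α - α₀)) :=
  cos_pos_of_mem_Ioo ⟨by linarith [h.1], by linarith [h.2]⟩

theorem rr_pos (hd : 0 < d) (hc : 0 < cos (2 * (α - α₀))) : 0 < rr d α₀ α :=
  sqrt_pos.2 (div_pos hd hc)

theorem hasDerivAt_rr (hd : 0 < d) (hc : 0 < cos (2 * (α - α₀))) :
    HasDerivAt (rr d α₀) (rr d α₀ α * sin (2 * (α - α₀)) / cos (2 * (α - α₀))) α := by
  have hcos : HasDerivAt (fun a => cos (2 * (a - α₀))) (-sin (2 * (α - α₀)) * 2) α := by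
    simpa using ((hasDerivAt_id α).sub_const α₀).const_mul 2 |>.cos
  have hquot : HasDerivAt (fun a => d / cos (2 * (a - α₀)))
      ((0 * cos (2 * (α - α₀)) - d * (-sin (2 * (α - α₀)) * 2)) / cos (2 * (α - α₀)) ^ 2) α :=
    (hasDerivAt_const α d).div hcos hc.ne'
  refine (hquot.sqrt (div_pos hd hc).ne').congr_deriv ?_
  have hr : d = rr d α₀ α ^ 2 * cos (2 * (α - α₀)) := by
    rw [rr, sq_sqrt (div_pos hd hc).le, div_mul_cancel₀ d hc.ne']
  rw [← rr]
  field_simp [(rr_pos hd hc).ne']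
  linear_combination 2 * sin (2 * (α - α₀)) * hr

theorem hasDerivAt_rr_mul (hd : 0 < d) (hc : 0 < cos (2 * (α - α₀))) {f : ℝ → ℝ} {f' : ℝ}
    (hf : HasDerivAt f f' α) :
    HasDerivAt (fun a => rr d α₀ a * f a) ((cos (2 * (α - α₀)))⁻¹ *
      (rr d α₀ α * (sin (2 * (α - α₀)) * f α + cos (2 * (α - α₀)) * f'))) α :=
  ((hasDerivAt_rr hd hc).mul hf).congr_deriv (by field_simp)

theorem sqrt_deriv_rr_sq_add_rr_sq (hd : 0 < d) (hc : 0 < cos (2 * (α - α₀))) :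
    √(deriv (rr d α₀) α ^ 2 + rr d α₀ α ^ 2) = rr d α₀ α / cos (2 * (α - α₀)) := by
  rw [(hasDerivAt_rr hd hc).deriv, sqrt_eq_iff_mul_self_eq_of_pos (div_pos (rr_pos hd hc) hc)]
  field_simp
  linear_combination -rr d α₀ α ^ 2 * sin_sq_add_cos_sq (2 * (α - α₀))

theorem hasDerivAt_U_fst (hd : 0 < d) (hc : 0 < cos (2 * (α - α₀))) (β : ℝ) :
    HasDerivAt (fun a => U d α₀ a β) ((cos (2 * (α - α₀)))⁻¹ • W d α₀ α β) α := by
  simp only [U_eq_emb]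
  refine (hasDerivAt_emb (hasDerivAt_rr_mul hd hc (hasDerivAt_cos α))
    (hasDerivAt_rr_mul hd hc (hasDerivAt_sin α)) β).congr_deriv ?_
  rw [W, smul_emb, show α - 2 * α₀ = 2 * (α - α₀) - α by ring, sin_sub, cos_sub]
  ring_nf

theorem hasDerivAt_W_fst (hd : 0 < d) (hc : 0 < cos (2 * (α - α₀))) (β : ℝ) :
    HasDerivAt (fun a => W d α₀ a β) ((cos (2 * (α - α₀)))⁻¹ • U d α₀ α β) α := by
  have hψ := (hasDerivAt_id α).sub_const (2 * α₀)
  refine (hasDerivAt_emb (hasDerivAt_rr_mul hd hc ((hasDerivAt_sin _).comp α hψ))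
    (hasDerivAt_rr_mul hd hc ((hasDerivAt_cos _).comp α hψ)) β).congr_deriv ?_
  have hcos : cos α = cos (2 * (α - α₀)) * cos (α - 2 * α₀) +
      sin (2 * (α - α₀)) * sin (α - 2 * α₀) := by
    rw [← cos_sub]; ring_nf
  have hsin : sin α = sin (2 * (α - α₀)) * cos (α - 2 * α₀) -
      cos (2 * (α - α₀)) * sin (α - 2 * α₀) := by
    rw [← sin_sub]; ring_nf
  rw [U_eq_emb, smul_emb, hcos, hsin]
  simp only [Function.comp_apply, id]
  ring_nf

theorem exists_forall_le_rr (α₀ : ℝ) (hd : 0 < d) {R : ℝ} (hR : 0 < R) :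
    ∃ a' b', α₀ - π / 4 < a' ∧ a' ≤ b' ∧ b' < α₀ + π / 4 ∧
      ∀ α ∈ Ioo (α₀ - π / 4) (α₀ + π / 4), α ∉ Ioo a' b' → R ≤ rr d α₀ α := by
  set t := min 1 (d / R ^ 2)
  have ht : 0 < t := lt_min one_pos (by positivity)
  have hθ : arccos t < π / 2 := arccos_lt_pi_div_two.2 ht
  refine ⟨α₀ - arccos t / 2, α₀ + arccos t / 2, by linarith, by linarith [arccos_nonneg t],
    by linarith, fun α hα hα' => ?_⟩
  have hle : arccos t ≤ |2 * (α - α₀)| := by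
    rw [le_abs]
    by_contra! h
    exact hα' ⟨by linarith, by linarith⟩
  have hcos : cos (2 * (α - α₀)) ≤ d / R ^ 2 := calc
    cos (2 * (α - α₀)) = cos |2 * (α - α₀)| := (cos_abs _).symm
    _ ≤ cos (arccos t) := cos_le_cos_of_nonneg_of_le_pi (arccos_nonneg t)
        (abs_le.2 ⟨by linarith [hα.1, pi_pos], by linarith [hα.2, pi_pos]⟩) hle
    _ = t := cos_arccos (by linarith) (min_le_left _ _)
    _ ≤ d / R ^ 2 := min_le_right _ _
  rw [rr, le_sqrt' hR, le_div_iff₀ (cos_two_mul_sub_pos hα)]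
  rw [le_div_iff₀ (by positivity)] at hcos
  linarith

end radius

section firstVariation

variable {X : ℝ⁴ → ℝ⁴} {d α₀ α : ℝ}

theorem firstVariation_density_eq (hd : 0 < d) (hc : 0 < cos (2 * (α - α₀)))
    (L : ℝ⁴ →L[ℝ] ℝ⁴) (β : ℝ) :
    (⟪N (deriv (fun a => U d α₀ a β) α), L (N (deriv (fun a => U d α₀ a β) α))⟫ +
        ⟪N (deriv (fun b => U d α₀ α b) β), L (N (deriv (fun b => U d α₀ α b) β))⟫) *
      (rr d α₀ α * √(deriv (rr d α₀) α ^ 2 + rr d α₀ α ^ 2)) =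
    (cos (2 * (α - α₀)))⁻¹ * (⟪L (W d α₀ α β), W d α₀ α β⟫ +
      ⟪L (U d α₀ α (β + π / 2)), U d α₀ α (β + π / 2)⟫) := by
  rw [(hasDerivAt_U_fst hd hc β).deriv, (hasDerivAt_U_snd d α₀ α β).deriv,
    N_smul_of_pos (inv_pos.2 hc), inner_N_apply_N, inner_N_apply_N, norm_W, norm_U,
    sqrt_deriv_rr_sq_add_rr_sq hd hc]
  field_simp [(rr_pos hd hc).ne']

variable (X d α₀)

noncomputable def divα (α β : ℝ) : ℝ :=
  (cos (2 * (α - α₀)))⁻¹ *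
    (⟪fderiv ℝ X (U d α₀ α β) (W d α₀ α β), W d α₀ α β⟫ + ⟪X (U d α₀ α β), U d α₀ α β⟫)

noncomputable def divβ (α β : ℝ) : ℝ :=
  (cos (2 * (α - α₀)))⁻¹ *
    (⟪fderiv ℝ X (U d α₀ α β) (U d α₀ α (β + π / 2)), U d α₀ α (β + π / 2)⟫ -
      ⟪X (U d α₀ α β), U d α₀ α β⟫)

variable {X d α₀}

theorem hasDerivAt_divα (hX : Differentiable ℝ X) (hd : 0 < d) (hc : 0 < cos (2 * (α - α₀)))
    (β : ℝ) : HasDerivAt (fun a => ⟪X (U d α₀ a β), W d α₀ a β⟫) (divα X d α₀ α β) α := by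
  have hXU := (hX _).hasFDerivAt.comp_hasDerivAt α (hasDerivAt_U_fst hd hc β)
  refine (hXU.inner ℝ (hasDerivAt_W_fst hd hc β)).congr_deriv ?_
  rw [divα, map_smul, real_inner_smul_left, real_inner_smul_right, Function.comp_apply]
  ring

theorem hasDerivAt_divβ (hX : Differentiable ℝ X) (β : ℝ) :
    HasDerivAt (fun b => (cos (2 * (α - α₀)))⁻¹ * ⟪X (U d α₀ α b), U d α₀ α (b + π / 2)⟫)
      (divβ X d α₀ α β) β := by
  have hXU := (hX _).hasFDerivAt.comp_hasDerivAt β (hasDerivAt_U_snd d α₀ α β)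
  have hV := (hasDerivAt_U_snd d α₀ α (β + π / 2)).comp_add_const β (π / 2)
  refine ((hXU.inner ℝ hV).const_mul _).congr_deriv ?_
  rw [divβ, add_assoc, add_halves, U_add_pi, inner_neg_right, Function.comp_apply]
  ring

theorem continuousOn_divα (hX : ContDiff ℝ 1 X) (hd : 0 < d) :
    ContinuousOn (uncurry (divα X d α₀)) (Ioo (α₀ - π / 4) (α₀ + π / 4) ×ˢ univ) := by
  set S := Ioo (α₀ - π / 4) (α₀ + π / 4) ×ˢ (univ : Set ℝ)
  have hr : ContinuousOn (fun z : ℝ × ℝ => rr d α₀ z.1) S := fun z hz =>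
    ((hasDerivAt_rr hd (cos_two_mul_sub_pos hz.1)).continuousAt.comp
      continuous_fst.continuousAt).continuousWithinAt
  have hU : ContinuousOn (fun z : ℝ × ℝ => U d α₀ z.1 z.2) S := by
    simp only [U_eq_emb]
    exact continuous_emb.comp_continuousOn
      (f := fun z : ℝ × ℝ => (rr d α₀ z.1 * cos z.1, rr d α₀ z.1 * sin z.1, z.2)) (by fun_prop)
  have hW : ContinuousOn (fun z : ℝ × ℝ => W d α₀ z.1 z.2) S :=
    continuous_emb.comp_continuousOn (f := fun z : ℝ × ℝ =>
      (rr d α₀ z.1 * sin (z.1 - 2 * α₀), rr d α₀ z.1 * cos (z.1 - 2 * α₀), z.2)) (by fun_prop)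
  have hc : ContinuousOn (fun z : ℝ × ℝ => (cos (2 * (z.1 - α₀)))⁻¹) S :=
    ContinuousOn.inv₀ (by fun_prop) fun z hz => (cos_two_mul_sub_pos hz.1).ne'
  have hX₀ := hX.continuous
  have hX₁ := hX.continuous_fderiv one_ne_zero
  unfold divα uncurry
  fun_prop

theorem continuous_divβ (hX : ContDiff ℝ 1 X) : Continuous (divβ X d α₀ α) := by
  have hU : Continuous (U d α₀ α) :=
    continuous_iff_continuousAt.2 fun β => (hasDerivAt_U_snd d α₀ α β).continuousAt
  have hX₀ := hX.continuous
  have hX₁ := hX.continuous_fderiv one_ne_zero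
  unfold divβ
  fun_prop

end firstVariation

theorem stmt_12 (d α₀ : ℝ) (hd : 0 < d)
    (X : EuclideanSpace ℝ (Fin 4) → EuclideanSpace ℝ (Fin 4))
    (hX : ContDiff ℝ 1 X) (hXc : HasCompactSupport X) :
    (∫ α in Set.Ioo (α₀ - π / 4) (α₀ + π / 4),
      ∫ β in Set.Ioo (0 : ℝ) (2 * π),
        (⟪N (deriv (fun a => U d α₀ a β) α),
            fderiv ℝ X (U d α₀ α β) (N (deriv (fun a => U d α₀ a β) α))⟫ +
         ⟪N (deriv (fun b => U d α₀ α b) β),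
            fderiv ℝ X (U d α₀ α β) (N (deriv (fun b => U d α₀ α b) β))⟫) *
          (rr d α₀ α *
            Real.sqrt ((deriv (rr d α₀) α) ^ 2 + (rr d α₀ α) ^ 2))) = 0 := by
  have hXd : Differentiable ℝ X := hX.differentiable one_ne_zero
  obtain ⟨R, hR, hXR⟩ := hXc.exists_pos_le_norm
  obtain ⟨a', b', ha', hab', hb', hRr⟩ := exists_forall_le_rr α₀ hd hR
  calc _ = ∫ α in Ioo (α₀ - π / 4) (α₀ + π / 4), ∫ β in Ioo 0 (2 * π),
        (divα X d α₀ α β + divβ X d α₀ α β) := by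
        refine setIntegral_congr_fun measurableSet_Ioo fun α hα =>
          setIntegral_congr_fun measurableSet_Ioo fun β _ => ?_
        rw [firstVariation_density_eq hd (cos_two_mul_sub_pos hα), divα, divβ]
        ring
    _ = 0 := integral_integral_add_eq_zero_of_hasDerivAt ha' hab' hb' two_pi_pos.le
        (continuousOn_divα hX hd) (fun _ _ => continuous_divβ hX)
        (fun α hα => hasDerivAt_divα hXd hd (cos_two_mul_sub_pos hα))
        (fun _ _ => hasDerivAt_divβ hXd)
        (fun α hα hα' β => by
          rw [hXR _ ((norm_U d α₀ α β).symm ▸ hRr α hα hα'), inner_zero_left])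
        (fun α _ => by rw [← zero_add (2 * π), U_add_two_pi, add_right_comm, U_add_two_pi])
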